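/- arXiv:2602.17982 — 2 statements merged into one kernel-verified Lean document; each statement's English description precedes it below -/
import Mathlib

section
/- Let Λ be a finite simple graph and let A, B be sets of vertices. If Φ₁, Φ₂, Φ₃ ∈ Mincut_Λ(A,B) satisfy Φ₁ < Φ₂ < Φ₃, then Φ₂ separates Φ₁ from Φ₃. -/
/-!
Every vertex `v` of a minimal cut `C` between `A` and `B` is attached to the `A`-side: either
`v ∈ A` or `v` has a neighbour in `C^A`, for otherwise `C \ {v}` would still separate. So if
`C^A` avoids another cut `C'`, all of `C \ C'` lies in `C'^A`. Applied to `Φ₁ < Φ₂` this puts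
`Φ₁ \ Φ₂` into `Φ₂^A`, and applied to `Φ₂ < Φ₃` it puts `Φ₂ \ Φ₃` into `Φ₃^A`, so that `Φ₃^B`
avoids `Φ₂`. With `A` and `B` swapped this puts `Φ₃ \ Φ₂` into `Φ₂^B`, and the two sides of `Φ₂`
are separated by `Φ₂`.
-/

universe u

/-- `C` separates `A` from `B` in the graph `G`: every vertex of `A \ C` and every vertex of
`B \ C` lie in different connected components of the subgraph induced on the complement of `C`. -/
def Separates {V : Type u} (G : SimpleGraph V) (A B C : Set V) : Prop :=
  ∀ x (hx : x ∈ A \ C) y (hy : y ∈ B \ C),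
    ¬ (G.induce Cᶜ).Reachable ⟨x, hx.2⟩ ⟨y, hy.2⟩

/-- `C` is a minimal cut between `A` and `B`: it separates `A` from `B` and no proper subset
of `C` does. -/
def IsMincutBetween {V : Type u} (G : SimpleGraph V) (A B C : Set V) : Prop :=
  Separates G A B C ∧ ∀ C' ⊆ C, C' ≠ C → ¬ Separates G A B C'

/-- The collection of all minimal cuts between `A` and `B` in `G`. -/
def Mincut {V : Type u} (G : SimpleGraph V) (A B : Set V) : Set (Set V) :=
  {C | IsMincutBetween G A B C}

/-- `Φ^A`: the union of those connected components of the induced subgraph on the complement of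
`Φ` that contain at least one vertex of `A \ Φ`. -/
def sideOf {V : Type u} (G : SimpleGraph V) (A Φ : Set V) : Set V :=
  {v | ∃ (hv : v ∉ Φ), ∃ x, ∃ (hx : x ∈ A \ Φ),
    (G.induce Φᶜ).Reachable ⟨v, hv⟩ ⟨x, hx.2⟩}

namespace SimpleGraph

variable {V : Type*} {G : SimpleGraph V}

theorem reachable_induce_iff {s : Set V} {u v : V} (hu : u ∈ s) (hv : v ∈ s) :
    (G.induce s).Reachable ⟨u, hu⟩ ⟨v, hv⟩ ↔ ∃ p : G.Walk u v, ∀ w ∈ p.support, w ∈ s := by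
  constructor
  · rintro ⟨q⟩
    refine ⟨q.map (Embedding.induce s).toHom, fun w hw => ?_⟩
    obtain ⟨w', -, rfl⟩ := List.mem_map.1 (q.support_map (Embedding.induce s).toHom ▸ hw)
    exact w'.2
  · rintro ⟨p, hp⟩
    exact ⟨p.induce s hp⟩

end SimpleGraph

open SimpleGraph

section Cuts

variable {V : Type*} {G : SimpleGraph V} {A B C C' : Set V} {u v : V}

theorem mem_sideOf_iff :
    v ∈ sideOf G A C ↔ ∃ x ∈ A, ∃ p : G.Walk v x, ∀ w ∈ p.support, w ∉ C := by
  constructor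
  · rintro ⟨hv, x, hx, r⟩
    exact ⟨x, hx.1, (reachable_induce_iff _ _).1 r⟩
  · rintro ⟨x, hxA, p, hp⟩
    exact ⟨hp v p.start_mem_support, x, ⟨hxA, hp x p.end_mem_support⟩,
      (reachable_induce_iff _ _).2 ⟨p, hp⟩⟩

theorem disjoint_sideOf_self : Disjoint (sideOf G A C) C :=
  Set.disjoint_left.2 fun _ hv => hv.1

theorem mem_sideOf_of_mem (hA : v ∈ A) (hC : v ∉ C) : v ∈ sideOf G A C :=
  ⟨hC, v, ⟨hA, hC⟩, .refl _⟩

theorem mem_sideOf_of_adj (hv : v ∉ C) (hadj : G.Adj v u) (hu : u ∈ sideOf G A C) :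
    v ∈ sideOf G A C := by
  obtain ⟨x, hxA, p, hp⟩ := mem_sideOf_iff.1 hu
  refine mem_sideOf_iff.2 ⟨x, hxA, .cons hadj p, fun w hw => ?_⟩
  rcases List.mem_cons.1 (Walk.support_cons hadj p ▸ hw) with rfl | hw
  exacts [hv, hp w hw]

theorem sideOf_subset_sideOf (hdisj : Disjoint (sideOf G A C) C') :
    sideOf G A C ⊆ sideOf G A C' := by
  classical
  intro v hv
  obtain ⟨x, hxA, p, hp⟩ := mem_sideOf_iff.1 hv
  -- every vertex of `p` reaches `x` along the rest of `p`, so it lies in `C^A`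
  have hside : ∀ w ∈ p.support, w ∈ sideOf G A C := fun w hw =>
    mem_sideOf_iff.2 ⟨x, hxA, p.dropUntil w hw,
      fun z hz => hp z (p.support_dropUntil_subset_support hw hz)⟩
  exact mem_sideOf_iff.2 ⟨x, hxA, p, fun w hw => hdisj.notMem_of_mem_left (hside w hw)⟩

theorem Separates.symm (h : Separates G A B C) : Separates G B A C :=
  fun x hx y hy r => h y hy x hx r.symm

theorem Separates.disjoint_sideOf (h : Separates G A B C) :
    Disjoint (sideOf G A C) (sideOf G B C) := by
  rw [Set.disjoint_left]
  rintro _ ⟨_, a, ha, ra⟩ ⟨_, b, hb, rb⟩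
  exact h a ha b hb (ra.symm.trans rb)

theorem Separates.of_subset_sideOf {A' B' : Set V} (h : Separates G A B C)
    (hA : A' \ C ⊆ sideOf G A C) (hB : B' \ C ⊆ sideOf G B C) : Separates G A' B' C := by
  intro x hx y hy r
  obtain ⟨_, a, ha, ra⟩ := hA hx
  have hyA : y ∈ sideOf G A C := ⟨hy.2, a, ha, r.symm.trans ra⟩
  exact h.disjoint_sideOf.notMem_of_mem_left hyA (hB hy)

theorem IsMincutBetween.symm (h : IsMincutBetween G A B C) : IsMincutBetween G B A C :=
  ⟨h.1.symm, fun C' hC' hne hsep => h.2 C' hC' hne hsep.symm⟩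

theorem IsMincutBetween.mem_or_exists_adj_sideOf (h : IsMincutBetween G A B C) (hv : v ∈ C) :
    v ∈ A ∨ ∃ u, G.Adj v u ∧ u ∈ sideOf G A C := by
  by_contra! hcon
  obtain ⟨hvA, hadj⟩ := hcon
  refine h.2 (C \ {v}) Set.sdiff_subset (fun he => (he ▸ hv).2 rfl) fun x hx y hy r => ?_
  obtain ⟨p, hp⟩ := (reachable_induce_iff _ _).1 r
  have hpC : ∀ w ∈ p.support, w ≠ v → w ∉ C := fun w hw hwv hwC => hp w hw ⟨hwC, hwv⟩
  have hxS : x ∈ sideOf G A C :=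
    mem_sideOf_of_mem hx.1 (hpC x p.start_mem_support fun hxv => hvA (hxv ▸ hx.1))
  have hyS : y ∉ sideOf G A C := fun hyS =>
    h.1.disjoint_sideOf.notMem_of_mem_left hyS (mem_sideOf_of_mem hy.1 hyS.1)
  -- the walk from `x` to `y` has to leave `C^A`, and it can only do so through `v`
  obtain ⟨d, hd, hfst, hsnd⟩ := p.exists_boundary_dart _ hxS hyS
  by_cases hdv : d.snd = v
  · exact hadj d.fst (hdv ▸ d.adj.symm) hfst
  · exact hsnd (mem_sideOf_of_adj (hpC _ (p.dart_snd_mem_support_of_mem_darts hd) hdv)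
      d.adj.symm hfst)

theorem IsMincutBetween.diff_subset_sideOf (h : IsMincutBetween G A B C)
    (hdisj : Disjoint (sideOf G A C) C') : C \ C' ⊆ sideOf G A C' := by
  rintro v ⟨hvC, hvC'⟩
  rcases h.mem_or_exists_adj_sideOf hvC with hvA | ⟨u, hadj, hu⟩
  · exact mem_sideOf_of_mem hvA hvC'
  · exact mem_sideOf_of_adj hvC' hadj (sideOf_subset_sideOf hdisj hu)

end Cuts

theorem mincut_separate_general {V : Type u} (G : SimpleGraph V)
    (A B Φ₁ Φ₂ Φ₃ : Set V)
    (h₁ : Φ₁ ∈ Mincut G A B) (h₂ : Φ₂ ∈ Mincut G A B) (h₃ : Φ₃ ∈ Mincut G A B)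
    (h12 : sideOf G A Φ₁ ⊆ sideOf G A Φ₂)
    (h23 : sideOf G A Φ₂ ⊆ sideOf G A Φ₃) :
    Separates G Φ₁ Φ₃ Φ₂ := by
  have hB₃ : Disjoint (sideOf G B Φ₃) Φ₂ := by
    refine Set.disjoint_left.2 fun w hwB hw₂ => ?_
    have hwA : w ∈ sideOf G A Φ₃ :=
      h₂.diff_subset_sideOf (disjoint_sideOf_self.mono_left h23) ⟨hw₂, hwB.1⟩
    exact h₃.1.disjoint_sideOf.notMem_of_mem_left hwA hwB
  exact h₂.1.of_subset_sideOf (h₁.diff_subset_sideOf (disjoint_sideOf_self.mono_left h12))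
    (h₃.symm.diff_subset_sideOf hB₃)

/-- Lemma `lem:separate`. If `Φ₁ < Φ₂ < Φ₃` in `Mincut(A,B)`,
then `Φ₂` separates `Φ₁` from `Φ₃`. -/
theorem mincut_separate {V : Type u} [Fintype V] (G : SimpleGraph V)
    (A B Φ₁ Φ₂ Φ₃ : Set V)
    (h₁ : Φ₁ ∈ Mincut G A B) (h₂ : Φ₂ ∈ Mincut G A B) (h₃ : Φ₃ ∈ Mincut G A B)
    (h12 : sideOf G A Φ₁ ⊆ sideOf G A Φ₂) (hne12 : Φ₁ ≠ Φ₂)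
    (h23 : sideOf G A Φ₂ ⊆ sideOf G A Φ₃) (hne23 : Φ₂ ≠ Φ₃) :
    Separates G Φ₁ Φ₃ Φ₂ :=
  mincut_separate_general G A B Φ₁ Φ₂ Φ₃ h₁ h₂ h₃ h12 h23
end

section
/- Let Λ be a finite simple graph and let A, B be sets of vertices. Then the pair (Mincut_Λ(A,B), <), where < is the relation Φ₁ < Φ₂ iff Φ₁^A ⊆ Φ₂^A and Φ₁ ≠ Φ₂, is an admissible pair for Λ. -/
universe u

/-- The reflexivization `x ≼ y` of a strict relation `R`. -/
def RLe {α : Type*} (R : α → α → Prop) (x y : α) : Prop := R x y ∨ x = y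

/-- `j` is a join (least upper bound) of `x` and `y` for the strict relation `R`. -/
def IsJoinOf {α : Type*} (R : α → α → Prop) (x y j : α) : Prop :=
  RLe R x j ∧ RLe R y j ∧ ∀ u, RLe R x u → RLe R y u → RLe R j u

/-- `m` is a meet (greatest lower bound) of `x` and `y` for the strict relation `R`. -/
def IsMeetOf {α : Type*} (R : α → α → Prop) (x y m : α) : Prop :=
  RLe R m x ∧ RLe R m y ∧ ∀ u, RLe R u x → RLe R u y → RLe R u m

/-- An admissible pair `(Q, lt)` for the graph `G`: `Q` is a collection of vertex sets and `lt`
is a strict partial order on `Q` such that minimal cuts between comparable members of `Q` again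
belong to `Q` and lie between them, middle elements of chains separate, and upper/lower bounded
pairs have joins/meets contained in the union. -/
structure AdmissiblePair {V : Type u} (G : SimpleGraph V) (Q : Set (Set V))
    (lt : Set V → Set V → Prop) : Prop where
  irrefl : ∀ A ∈ Q, ¬ lt A A
  trans : ∀ A ∈ Q, ∀ B ∈ Q, ∀ C ∈ Q, lt A B → lt B C → lt A C
  mincut_mem : ∀ A ∈ Q, ∀ B ∈ Q, (lt A B ∨ lt B A) → ∀ C ∈ Mincut G A B,
    C ∈ Q ∧ ((RLe lt A C ∧ RLe lt C B) ∨ (RLe lt B C ∧ RLe lt C A))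
  btw_separates : ∀ A ∈ Q, ∀ B ∈ Q, ∀ C ∈ Q, lt A B → lt B C → Separates G A C B
  join_exists : ∀ A ∈ Q, ∀ B ∈ Q, (∃ U ∈ Q, RLe lt A U ∧ RLe lt B U) →
    ∃ J ∈ Q, J ⊆ A ∪ B ∧ RLe lt A J ∧ RLe lt B J ∧
      ∀ U ∈ Q, RLe lt A U → RLe lt B U → RLe lt J U
  meet_exists : ∀ A ∈ Q, ∀ B ∈ Q, (∃ U ∈ Q, RLe lt U A ∧ RLe lt U B) →
    ∃ M ∈ Q, M ⊆ A ∪ B ∧ RLe lt M A ∧ RLe lt M B ∧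
      ∀ U ∈ Q, RLe lt U A → RLe lt U B → RLe lt U M

/-!
Everything is read off the sides `Φ^A`, `Φ^B` of a minimal cut `Φ`: by minimality every vertex
of `Φ` lies in `A` or has a neighbour in `Φ^A`, and likewise for `B`. Hence `Φ^A ⊆ Ψ^A` forces
`Φ \ Ψ ⊆ Ψ^A`; this makes `Φ ↦ Φ^A` injective on minimal cuts and order-reversing for the
`B`-sides, so meets are joins for the pair `(B, A)`.

A minimal cut `C` between minimal cuts `Φ ≤ Ψ` lies in the closed region `(Φ ∪ Φ^B) ∩ (Ψ ∪ Ψ^A)`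
between them, since the part of `C` inside that region already separates `Φ` from `Ψ`. So `C`
misses `Φ^A` and `Ψ^B`, which gives `Φ^A ⊆ C^A ⊆ Ψ^A` and the minimality of `C` as an
`(A, B)`-cut. The join of `Φ` and `Ψ` is a minimal cut inside `(Φ ∪ Ψ) \ (Φ^A ∪ Ψ^A)`: this set
separates `A` from `B` because `Φ^A ∪ Ψ^A` can only be left through it.
-/

namespace SimpleGraph

variable {V : Type*} (G : SimpleGraph V)

/-- Reachability in `G.induce Cᶜ`, stated for vertices of `V` rather than of the subtype `Cᶜ`. -/
def ReachableOff (C : Set V) (x y : V) : Prop :=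
  x ∉ C ∧ y ∉ C ∧ Relation.ReflTransGen (fun a b => G.Adj a b ∧ a ∉ C ∧ b ∉ C) x y

def IsClosedOff (X I : Set V) : Prop :=
  ∀ a ∈ I, ∀ b, G.Adj a b → b ∉ X → b ∈ I

variable {G} {C D X I J : Set V} {x y z : V}

theorem IsClosedOff.mono (hI : G.IsClosedOff X I) (hXD : X ⊆ D) : G.IsClosedOff D I :=
  fun a ha b hab hb => hI a ha b hab fun hbX => hb (hXD hbX)

theorem IsClosedOff.inter (hI : G.IsClosedOff X I) (hJ : G.IsClosedOff X J) :
    G.IsClosedOff X (I ∩ J) :=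
  fun a ha b hab hb => ⟨hI a ha.1 b hab hb, hJ a ha.2 b hab hb⟩

theorem IsClosedOff.union (hI : G.IsClosedOff X I) (hJ : G.IsClosedOff X J) :
    G.IsClosedOff X (I ∪ J) := by
  rintro a (ha | ha) b hab hb
  exacts [.inl (hI a ha b hab hb), .inr (hJ a ha b hab hb)]

theorem IsClosedOff.diff_self (hI : G.IsClosedOff X I) : G.IsClosedOff (X \ I) I :=
  fun a ha b hab hb => by_contra fun hbI => hbI (hI a ha b hab fun hbX => hb ⟨hbX, hbI⟩)

namespace ReachableOff

theorem refl (hx : x ∉ C) : G.ReachableOff C x x := ⟨hx, hx, .refl⟩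

theorem single (hxy : G.Adj x y) (hx : x ∉ C) (hy : y ∉ C) : G.ReachableOff C x y :=
  ⟨hx, hy, .single ⟨hxy, hx, hy⟩⟩

theorem trans (hxy : G.ReachableOff C x y) (hyz : G.ReachableOff C y z) :
    G.ReachableOff C x z :=
  ⟨hxy.1, hyz.2.1, hxy.2.2.trans hyz.2.2⟩

theorem symm (h : G.ReachableOff C x y) : G.ReachableOff C y x := by
  obtain ⟨hx, -, r⟩ := h
  induction r with
  | refl => exact refl hx
  | tail _ st ih => exact (single st.1.symm st.2.2 st.2.1).trans ih

theorem mono (hCD : C ⊆ D) (h : G.ReachableOff D x y) : G.ReachableOff C x y :=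
  ⟨fun hx => h.1 (hCD hx), fun hy => h.2.1 (hCD hy),
    Relation.ReflTransGen.mono (fun _ _ st => ⟨st.1, fun ha => st.2.1 (hCD ha),
      fun hb => st.2.2 (hCD hb)⟩) _ _ h.2.2⟩

theorem mem_of_isClosedOff (h : G.ReachableOff X x y) (hI : G.IsClosedOff X I) (hx : x ∈ I) :
    y ∈ I := by
  obtain ⟨-, -, r⟩ := h
  induction r with
  | refl => exact hx
  | tail _ st ih => exact hI _ ih _ st.1 st.2.2

/-- The walk stays inside `I`, where avoiding `X` implies avoiding `C`. -/
theorem of_isClosedOff (h : G.ReachableOff X x y) (hI : G.IsClosedOff X I) (hx : x ∈ I)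
    (hCI : C ∩ I ⊆ X) : G.ReachableOff C x y := by
  obtain ⟨hxX, -, r⟩ := h
  have hC : ∀ a ∈ I, a ∉ X → a ∉ C := fun a ha haX haC => haX (hCI ⟨haC, ha⟩)
  suffices y ∈ I ∧ G.ReachableOff C x y from this.2
  induction r with
  | refl => exact ⟨hx, refl (hC x hx hxX)⟩
  | tail _ st ih =>
    have hc := hI _ ih.1 _ st.1 st.2.2
    exact ⟨hc, ih.2.trans (single st.1 ih.2.2.1 (hC _ hc st.2.2))⟩

theorem union_or_exists_adj_first (h : G.ReachableOff C x y) (hx : x ∉ D) :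
    G.ReachableOff (C ∪ D) x y ∨
      ∃ w z, G.ReachableOff (C ∪ D) x w ∧ G.Adj w z ∧ z ∈ D ∧ G.ReachableOff C z y := by
  obtain ⟨hxC, hyC, r⟩ := h
  induction r using Relation.ReflTransGen.head_induction_on with
  | refl => exact .inl (refl (by simp [hxC, hx]))
  | @head a c st r ih =>
    have ha : a ∉ C ∪ D := by simp [st.2.1, hx]
    by_cases hcD : c ∈ D
    · exact .inr ⟨a, c, refl ha, st.1, hcD, st.2.2, hyC, r⟩
    · rcases ih hcD st.2.2 with hcy | ⟨w, z, hcw, hwz, hzD, hzy⟩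
      · exact .inl ((single st.1 ha hcy.1).trans hcy)
      · exact .inr ⟨w, z, (single st.1 ha hcw.1).trans hcw, hwz, hzD, hzy⟩

theorem union_or_exists_mem (h : G.ReachableOff C x y) (D : Set V) :
    G.ReachableOff (C ∪ D) x y ∨ ∃ z ∈ D, G.ReachableOff C x z ∧ G.ReachableOff C z y := by
  by_cases hx : x ∈ D
  · exact .inr ⟨x, hx, refl h.1, h⟩
  · refine (h.union_or_exists_adj_first hx).imp_right ?_
    rintro ⟨w, z, hxw, hwz, hzD, hzy⟩
    have hxw' := hxw.mono Set.subset_union_left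
    exact ⟨z, hzD, hxw'.trans (single hwz hxw'.2.1 hzy.1), hzy⟩

end ReachableOff

theorem reachableOff_iff_reachable (hx : x ∉ C) (hy : y ∉ C) :
    G.ReachableOff C x y ↔ (G.induce Cᶜ).Reachable ⟨x, hx⟩ ⟨y, hy⟩ := by
  rw [reachable_iff_reflTransGen]
  constructor
  · rintro ⟨-, -, r⟩
    induction r with
    | refl => exact .refl
    | tail _ st ih => exact (ih st.2.1).tail (induce_adj.2 st.1)
  · intro r
    exact ⟨hx, hy, r.lift Subtype.val fun a b hab => ⟨induce_adj.1 hab, a.2, b.2⟩⟩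

end SimpleGraph

open SimpleGraph Set

section

variable {V : Type*} {G : SimpleGraph V} {A B C Φ Ψ : Set V} {x y : V}

theorem separates_iff : Separates G A B C ↔ ∀ x ∈ A, ∀ y ∈ B, ¬ G.ReachableOff C x y := by
  refine ⟨fun h x hx y hy hxy => ?_, fun h x hx y hy hxy => ?_⟩
  · exact h x ⟨hx, hxy.1⟩ y ⟨hy, hxy.2.1⟩ ((reachableOff_iff_reachable _ _).1 hxy)
  · exact h x hx.1 y hy.1 ((reachableOff_iff_reachable _ _).2 hxy)

theorem mem_sideOf : x ∈ sideOf G A Φ ↔ ∃ a ∈ A, G.ReachableOff Φ x a := by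
  constructor
  · rintro ⟨hx, a, ha, hxa⟩
    exact ⟨a, ha.1, (reachableOff_iff_reachable hx ha.2).2 hxa⟩
  · rintro ⟨a, ha, hxa⟩
    exact ⟨hxa.1, a, ⟨ha, hxa.2.1⟩, (reachableOff_iff_reachable _ _).1 hxa⟩

theorem notMem_of_mem_sideOf (hx : x ∈ sideOf G A Φ) : x ∉ Φ :=
  let ⟨_, _, hxa⟩ := mem_sideOf.1 hx
  hxa.1

theorem mem_sideOf_of_mem_s6 (hx : x ∈ A) (hxΦ : x ∉ Φ) : x ∈ sideOf G A Φ :=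
  mem_sideOf.2 ⟨x, hx, .refl hxΦ⟩

theorem SimpleGraph.ReachableOff.mem_sideOf (hxy : G.ReachableOff Φ x y)
    (hx : x ∈ sideOf G A Φ) :
    y ∈ sideOf G A Φ :=
  let ⟨a, ha, hxa⟩ := _root_.mem_sideOf.1 hx
  _root_.mem_sideOf.2 ⟨a, ha, hxy.symm.trans hxa⟩

theorem sideOf_isClosedOff : G.IsClosedOff Φ (sideOf G A Φ) :=
  fun _ ha _ hab hb => (ReachableOff.single hab (notMem_of_mem_sideOf ha) hb).mem_sideOf ha

theorem sideOf_anti (h : C ⊆ Φ) : sideOf G A Φ ⊆ sideOf G A C := fun _ hx =>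
  let ⟨a, ha, hxa⟩ := mem_sideOf.1 hx
  mem_sideOf.2 ⟨a, ha, hxa.mono h⟩

theorem sideOf_subset_sideOf_of_disjoint (h : Disjoint (sideOf G A Φ) C) :
    sideOf G A Φ ⊆ sideOf G A C := fun _ hx =>
  let ⟨a, ha, hxa⟩ := mem_sideOf.1 hx
  mem_sideOf.2 ⟨a, ha, hxa.of_isClosedOff sideOf_isClosedOff hx
    fun _ hv => absurd hv.1 (Set.disjoint_left.1 h hv.2)⟩

theorem separates_iff_disjoint_sideOf :
    Separates G A B C ↔ Disjoint (sideOf G A C) (sideOf G B C) := by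
  rw [separates_iff, Set.disjoint_left]
  constructor
  · intro h v hvA hvB
    obtain ⟨a, ha, hva⟩ := mem_sideOf.1 hvA
    obtain ⟨b, hb, hvb⟩ := mem_sideOf.1 hvB
    exact h a ha b hb (hva.symm.trans hvb)
  · intro h a ha b hb hab
    exact h (mem_sideOf_of_mem_s6 ha hab.1) (mem_sideOf.2 ⟨b, hb, hab⟩)

theorem separates_comm : Separates G A B C ↔ Separates G B A C := by
  rw [separates_iff_disjoint_sideOf, separates_iff_disjoint_sideOf, disjoint_comm]

theorem mincut_comm (A B : Set V) : Mincut G A B = Mincut G B A := by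
  ext C
  simp only [Mincut, IsMincutBetween, mem_ofPred_eq, @separates_comm _ _ A B]

theorem Separates.of_diff_subset_sideOf {A' B' : Set V} (hC : Separates G A B C)
    (hA' : A' \ C ⊆ sideOf G A C) (hB' : B' \ C ⊆ sideOf G B C) : Separates G A' B' C := by
  rw [separates_iff]
  intro x hx y hy hxy
  exact (separates_iff_disjoint_sideOf.1 hC).notMem_of_mem_left (hA' ⟨hx, hxy.1⟩)
    (hxy.symm.mem_sideOf (hB' ⟨hy, hxy.2.1⟩))

/-- Every walk from `A` to `B` meets both `Φ` and `Ψ`. -/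
theorem separates_of_separates_cuts (hΦ : Separates G A B Φ) (hΨ : Separates G A B Ψ)
    (hC : Separates G Φ Ψ C) : Separates G A B C := by
  rw [separates_iff] at *
  intro a ha b hb hab
  rcases hab.union_or_exists_mem Φ with h | ⟨z, hzΦ, -, hzb⟩
  · exact hΦ a ha b hb (h.mono subset_union_right)
  rcases hab.union_or_exists_mem Ψ with h | ⟨w, hwΨ, -, hwb⟩
  · exact hΨ a ha b hb (h.mono subset_union_right)
  exact hC z hzΦ w hwΨ (hzb.trans hwb.symm)

theorem Separates.disjoint_sideOf_right (h : Separates G A B C) : Disjoint (sideOf G A C) B :=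
  Set.disjoint_left.2 fun _ hv hvB => (separates_iff_disjoint_sideOf.1 h).notMem_of_mem_left hv
    (mem_sideOf_of_mem_s6 hvB (notMem_of_mem_sideOf hv))

theorem exists_mincut_subset [Finite V] (h : Separates G A B C) :
    ∃ C' ⊆ C, C' ∈ Mincut G A B := by
  obtain ⟨C', hC'C, hmin⟩ := (toFinite {C | Separates G A B C}).exists_le_minimal h
  exact ⟨C', hC'C, hmin.1, fun C'' hC'' hne hsep => hne (hC''.antisymm (hmin.2 hsep hC''))⟩

theorem mem_or_adj_sideOf_of_mem_mincut (hΦ : Φ ∈ Mincut G A B) {v : V} (hv : v ∈ Φ) :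
    v ∈ A ∨ ∃ u ∈ sideOf G A Φ, G.Adj u v := by
  refine or_iff_not_imp_left.2 fun hvA => ?_
  have hnot : ¬ Separates G A B (Φ \ {v}) :=
    hΦ.2 _ sdiff_subset fun h => (h.symm ▸ hv : v ∈ Φ \ {v}).2 rfl
  simp only [separates_iff, not_forall, not_not] at hnot
  obtain ⟨a, ha, b, hb, hab⟩ := hnot
  have hav : a ∉ ({v} : Set V) := fun h => hvA (mem_singleton_iff.1 h ▸ ha)
  rcases hab.union_or_exists_adj_first hav with h | ⟨w, z, haw, hwz, rfl, -⟩
  · exact absurd (h.mono (by simp)) (separates_iff.1 hΦ.1 a ha b hb)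
  · exact ⟨w, mem_sideOf.2 ⟨a, ha, (haw.mono (by simp)).symm⟩, hwz⟩

theorem mincut_diff_subset_sideOf (hΦ : Φ ∈ Mincut G A B) (h : sideOf G A Φ ⊆ sideOf G A C) :
    Φ \ C ⊆ sideOf G A C := by
  rintro v ⟨hvΦ, hvC⟩
  rcases mem_or_adj_sideOf_of_mem_mincut hΦ hvΦ with hvA | ⟨u, hu, huv⟩
  · exact mem_sideOf_of_mem_s6 hvA hvC
  · exact sideOf_isClosedOff u (h hu) v huv hvC

theorem sideOf_injOn : InjOn (sideOf G A) (Mincut G A B) := by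
  have key : ∀ {Φ Ψ}, Φ ∈ Mincut G A B → sideOf G A Φ = sideOf G A Ψ → Φ ⊆ Ψ :=
    fun hΦ h v hv => by_contra fun hvΨ =>
      notMem_of_mem_sideOf (h ▸ mincut_diff_subset_sideOf hΦ h.le ⟨hv, hvΨ⟩) hv
  exact fun Φ hΦ Ψ hΨ h => (key hΦ h).antisymm (key hΨ h.symm)

/-- A walk from `C^A` to `A` meeting `Ψ` would meet it in `Ψ \ C ⊆ C^B`. -/
theorem sideOf_subset_sideOf_of_mem_mincut (hC : Separates G A B C) (hΨ : Ψ ∈ Mincut G A B)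
    (h : sideOf G B Ψ ⊆ sideOf G B C) : sideOf G A C ⊆ sideOf G A Ψ := by
  intro u hu
  obtain ⟨a, ha, hua⟩ := mem_sideOf.1 hu
  rcases hua.union_or_exists_mem Ψ with h' | ⟨z, hzΨ, huz, -⟩
  · exact mem_sideOf.2 ⟨a, ha, h'.mono subset_union_right⟩
  · have hzB : z ∈ sideOf G B C :=
      mincut_diff_subset_sideOf (mincut_comm A B ▸ hΨ) h ⟨hzΨ, huz.2.1⟩
    exact absurd hzB ((separates_iff_disjoint_sideOf.1 hC).notMem_of_mem_left (huz.mem_sideOf hu))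

theorem sideOf_subset_sideOf_iff (hΦ : Φ ∈ Mincut G A B) (hΨ : Ψ ∈ Mincut G A B) :
    sideOf G A Φ ⊆ sideOf G A Ψ ↔ sideOf G B Ψ ⊆ sideOf G B Φ :=
  ⟨sideOf_subset_sideOf_of_mem_mincut (separates_comm.1 hΨ.1) (mincut_comm A B ▸ hΦ),
    sideOf_subset_sideOf_of_mem_mincut hΦ.1 hΨ⟩

/-- A walk from `Φ` to `Ψ` avoiding the part of `C` in the region can be cut down to one that
leaves `Φ` for the last time into `Ψ^A` and then enters `Ψ` for the first time from `Φ^B`; the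
stretch in between stays in `Φ^B ∩ Ψ^A`, hence avoids all of `C`. -/
theorem mincut_subset_region (hC : C ∈ Mincut G Φ Ψ) (hΦΨ : Φ \ Ψ ⊆ sideOf G A Ψ)
    (hΨΦ : Ψ \ Φ ⊆ sideOf G B Φ) : C ⊆ (Φ ∪ sideOf G B Φ) ∩ (Ψ ∪ sideOf G A Ψ) := by
  set R := (Φ ∪ sideOf G B Φ) ∩ (Ψ ∪ sideOf G A Ψ)
  suffices hsep : Separates G Φ Ψ (C ∩ R) by
    by_contra hCR
    exact hC.2 _ inter_subset_left (fun h => hCR (h ▸ inter_subset_right)) hsep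
  have hΦΨC : Φ ∩ Ψ ⊆ C := fun v hv =>
    by_contra fun hvC => separates_iff.1 hC.1 v hv.1 v hv.2 (.refl hvC)
  have hΦR : Φ ⊆ R := fun v hv => ⟨.inl hv, (em (v ∈ Ψ)).imp_right fun hvΨ => hΦΨ ⟨hv, hvΨ⟩⟩
  have hΨR : Ψ ⊆ R := fun v hv => ⟨(em (v ∈ Φ)).imp_right fun hvΦ => hΨΦ ⟨hv, hvΦ⟩, .inl hv⟩
  have hI : G.IsClosedOff (C ∩ R ∪ Φ ∪ Ψ) (sideOf G B Φ ∩ sideOf G A Ψ) :=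
    (sideOf_isClosedOff.mono fun _ hv => .inl (.inr hv)).inter
      (sideOf_isClosedOff.mono subset_union_right)
  rw [separates_iff]
  intro p hp q hq hpq
  have hqΦ : q ∉ Φ := fun h => hpq.2.1 ⟨hΦΨC ⟨h, hq⟩, hΨR hq⟩
  obtain ⟨w, z, hqw, hwz, hzΦ, hzp⟩ :=
    (hpq.symm.union_or_exists_adj_first hqΦ).resolve_left fun h => h.2.1 (.inr hp)
  have hzC : z ∉ C := fun h => hzp.1 ⟨h, hΦR hzΦ⟩
  have hzΨ : z ∉ Ψ := fun h => hzC (hΦΨC ⟨hzΦ, h⟩)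
  by_cases hwΨ : w ∈ Ψ
  · have hwC : w ∉ C := fun h => hqw.2.1 (.inl ⟨h, hΨR hwΨ⟩)
    exact separates_iff.1 hC.1 z hzΦ w hwΨ (.single hwz.symm hzC hwC)
  have hwA : w ∈ sideOf G A Ψ := sideOf_isClosedOff z (hΦΨ ⟨hzΦ, hzΨ⟩) w hwz.symm hwΨ
  obtain ⟨w', z', hww', hw'z', hz'Ψ, hz'q⟩ :=
    (hqw.symm.union_or_exists_adj_first hwΨ).resolve_left fun h => h.2.1 (.inr hq)
  have hz'Φ : z' ∉ Φ := fun h => hz'q.1 (.inr h)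
  have hz'C : z' ∉ C := fun h => hz'q.1 (.inl ⟨h, hΨR hz'Ψ⟩)
  have hw'B : w' ∈ sideOf G B Φ :=
    sideOf_isClosedOff z' (hΨΦ ⟨hz'Ψ, hz'Φ⟩) w' hw'z'.symm fun h => hww'.2.1 (.inl (.inr h))
  have hw'A : w' ∈ sideOf G A Ψ := (hww'.mono subset_union_right).mem_sideOf hwA
  have hw'w : G.ReachableOff C w' w := hww'.symm.of_isClosedOff hI ⟨hw'B, hw'A⟩
    fun v hv => .inl (.inl ⟨hv.1, .inr hv.2.1, .inr hv.2.2⟩)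
  exact separates_iff.1 hC.1 z hzΦ z' hz'Ψ <| (ReachableOff.single hwz.symm hzC hw'w.2.1).trans
    (hw'w.symm.trans (.single hw'z' hw'w.1 hz'C))

theorem mem_mincut_of_mem_mincut_of_sideOf_subset (hΦ : Φ ∈ Mincut G A B)
    (hΨ : Ψ ∈ Mincut G A B) (hs : sideOf G A Φ ⊆ sideOf G A Ψ) (hC : C ∈ Mincut G Φ Ψ) :
    C ∈ Mincut G A B ∧ sideOf G A Φ ⊆ sideOf G A C ∧ sideOf G A C ⊆ sideOf G A Ψ := by
  have hΨ' : Ψ ∈ Mincut G B A := mincut_comm A B ▸ hΨ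
  have hCR := mincut_subset_region hC (mincut_diff_subset_sideOf hΦ hs)
    (mincut_diff_subset_sideOf hΨ' ((sideOf_subset_sideOf_iff hΦ hΨ).1 hs))
  have hsep : Separates G A B C := separates_of_separates_cuts hΦ.1 hΨ.1 hC.1
  have hΦC : sideOf G A Φ ⊆ sideOf G A C := sideOf_subset_sideOf_of_disjoint <|
    Set.disjoint_right.2 fun v hvC hvΦ => (separates_iff_disjoint_sideOf.1 hΦ.1).notMem_of_mem_left
      hvΦ ((hCR hvC).1.resolve_left (notMem_of_mem_sideOf hvΦ))
  have hΨC : sideOf G B Ψ ⊆ sideOf G B C := sideOf_subset_sideOf_of_disjoint <|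
    Set.disjoint_right.2 fun v hvC hvΨ => (separates_iff_disjoint_sideOf.1 hΨ.1).notMem_of_mem_left
      ((hCR hvC).2.resolve_left (notMem_of_mem_sideOf hvΨ)) hvΨ
  refine ⟨⟨hsep, fun C' hC'C hne hsep' => hC.2 C' hC'C hne ?_⟩, hΦC,
    sideOf_subset_sideOf_of_mem_mincut hsep hΨ hΨC⟩
  exact hsep'.of_diff_subset_sideOf (mincut_diff_subset_sideOf hΦ (hΦC.trans (sideOf_anti hC'C)))
    (mincut_diff_subset_sideOf hΨ' (hΨC.trans (sideOf_anti hC'C)))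

theorem exists_mincut_sup [Finite V] (hΦ : Φ ∈ Mincut G A B) (hΨ : Ψ ∈ Mincut G A B) :
    ∃ J ∈ Mincut G A B, J ⊆ Φ ∪ Ψ ∧ sideOf G A Φ ⊆ sideOf G A J ∧
      sideOf G A Ψ ⊆ sideOf G A J ∧ ∀ U ∈ Mincut G A B, sideOf G A Φ ⊆ sideOf G A U →
        sideOf G A Ψ ⊆ sideOf G A U → sideOf G A J ⊆ sideOf G A U := by
  set S := sideOf G A Φ ∪ sideOf G A Ψ
  have hS : G.IsClosedOff ((Φ ∪ Ψ) \ S) S := ((sideOf_isClosedOff.mono subset_union_left).union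
    (sideOf_isClosedOff.mono subset_union_right)).diff_self
  have hSB : Disjoint S B := hΦ.1.disjoint_sideOf_right.union_left hΨ.1.disjoint_sideOf_right
  have hJ₀ : Separates G A B ((Φ ∪ Ψ) \ S) := by
    rw [separates_iff]
    intro a ha b hb hab
    have haS : a ∈ S := by_contra fun haS =>
      haS (.inl (mem_sideOf_of_mem_s6 ha fun haΦ => hab.1 ⟨.inl haΦ, haS⟩))
    exact hSB.notMem_of_mem_left (hab.mem_of_isClosedOff hS haS) hb
  obtain ⟨J, hJ₀J, hJ⟩ := exists_mincut_subset hJ₀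
  have hSJ : Disjoint S J := disjoint_sdiff_right.mono_right hJ₀J
  refine ⟨J, hJ, fun v hv => (hJ₀J hv).1,
    sideOf_subset_sideOf_of_disjoint (hSJ.mono_left subset_union_left),
    sideOf_subset_sideOf_of_disjoint (hSJ.mono_left subset_union_right), fun U hU hΦU hΨU => ?_⟩
  -- `J ⊆ Φ ∪ Ψ ⊆ U ∪ U^A` misses `U^B`
  refine sideOf_subset_sideOf_of_mem_mincut hJ.1 hU (sideOf_subset_sideOf_of_disjoint ?_)
  refine Set.disjoint_right.2 fun v hvJ hvU => ?_
  have hvU' : v ∉ U := notMem_of_mem_sideOf hvU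
  have hvA : v ∈ sideOf G A U := (hJ₀J hvJ).1.elim
    (fun h => mincut_diff_subset_sideOf hΦ hΦU ⟨h, hvU'⟩)
    (fun h => mincut_diff_subset_sideOf hΨ hΨU ⟨h, hvU'⟩)
  exact (separates_iff_disjoint_sideOf.1 hU.1).notMem_of_mem_left hvA hvU

theorem exists_mincut_inf [Finite V] (hΦ : Φ ∈ Mincut G A B) (hΨ : Ψ ∈ Mincut G A B) :
    ∃ M ∈ Mincut G A B, M ⊆ Φ ∪ Ψ ∧ sideOf G A M ⊆ sideOf G A Φ ∧
      sideOf G A M ⊆ sideOf G A Ψ ∧ ∀ U ∈ Mincut G A B, sideOf G A U ⊆ sideOf G A Φ →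
        sideOf G A U ⊆ sideOf G A Ψ → sideOf G A U ⊆ sideOf G A M := by
  rw [mincut_comm A B] at hΦ hΨ ⊢
  obtain ⟨M, hM, hMΦΨ, hΦM, hΨM, hleast⟩ := exists_mincut_sup hΦ hΨ
  refine ⟨M, hM, hMΦΨ, (sideOf_subset_sideOf_iff hΦ hM).1 hΦM,
    (sideOf_subset_sideOf_iff hΨ hM).1 hΨM, fun U hU hUΦ hUΨ => ?_⟩
  exact (sideOf_subset_sideOf_iff hM hU).1 (hleast U hU ((sideOf_subset_sideOf_iff hΦ hU).2 hUΦ)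
    ((sideOf_subset_sideOf_iff hΨ hU).2 hUΨ))

end

theorem rle_iff_subset {α β : Type*} {f : α → Set β} {x y : α} :
    RLe (fun x y => f x ⊆ f y ∧ x ≠ y) x y ↔ f x ⊆ f y := by
  by_cases h : x = y <;> simp [RLe, h]

/-- Lemma `lem:mincut admissible`. `(Mincut(A,B), <)`, where
`Φ₁ < Φ₂ ↔ Φ₁^A ⊆ Φ₂^A ∧ Φ₁ ≠ Φ₂`, is an admissible pair for `Λ`. -/
theorem mincut_admissiblePair {V : Type u} [Fintype V] (G : SimpleGraph V) (A B : Set V) :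
    AdmissiblePair G (Mincut G A B)
      (fun Φ₁ Φ₂ => sideOf G A Φ₁ ⊆ sideOf G A Φ₂ ∧ Φ₁ ≠ Φ₂) := by
  refine ⟨fun _ _ h => h.2 rfl, ?_, ?_, ?_, ?_, ?_⟩
  · rintro Φ₁ h₁ Φ₂ h₂ Φ₃ - ⟨h₁₂, hne⟩ ⟨h₂₃, -⟩
    exact ⟨h₁₂.trans h₂₃, fun h => hne (sideOf_injOn h₁ h₂ (h₁₂.antisymm (h ▸ h₂₃)))⟩
  · simp only [rle_iff_subset]
    rintro Φ hΦ Ψ hΨ (⟨hs, -⟩ | ⟨hs, -⟩) C hC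
    · obtain ⟨hC, hΦC, hCΨ⟩ := mem_mincut_of_mem_mincut_of_sideOf_subset hΦ hΨ hs hC
      exact ⟨hC, .inl ⟨hΦC, hCΨ⟩⟩
    · obtain ⟨hC, hΨC, hCΦ⟩ :=
        mem_mincut_of_mem_mincut_of_sideOf_subset hΨ hΦ hs (mincut_comm Φ Ψ ▸ hC)
      exact ⟨hC, .inr ⟨hΨC, hCΦ⟩⟩
  · rintro Φ₁ h₁ Φ₂ h₂ Φ₃ h₃ ⟨h₁₂, -⟩ ⟨h₂₃, -⟩
    exact h₂.1.of_diff_subset_sideOf (mincut_diff_subset_sideOf h₁ h₁₂)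
      (mincut_diff_subset_sideOf (mincut_comm A B ▸ h₃) ((sideOf_subset_sideOf_iff h₂ h₃).1 h₂₃))
  · simp only [rle_iff_subset]
    exact fun Φ hΦ Ψ hΨ _ => exists_mincut_sup hΦ hΨ
  · simp only [rle_iff_subset]
    exact fun Φ hΦ Ψ hΨ _ => exists_mincut_inf hΦ hΨ
end
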